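/- Let p_s and p_a be probabilistic models over Σ with state maps (Q_s, q_s, f_s) and (Q_a, q_a, f_a) respectively, such that L(p_s) ⊆ L(p_a), p_s terminates almost surely, and the families {p_s(x)·log(p_s(x)/p_a(x))}_{x∈L(p_s)}, {p_s(h)·p_s(x|h)·log p_s(x|h)}_{h $-free, x∈Σ} and {p_s(h)·p_s(x|h)·log p_a(x|h)}_{h $-free, x∈Σ} are absolutely summable. Define c(x, α) = Σ_{$-free h∈Σ*: q_a(h)=α} p_s(h)·p_s(x|h) for x ∈ Σ and α ∈ Q_a. Then D(p_s‖p_a) = K − Σ_{α∈Q_a} Σ_{x∈Σ} c(x,α)·log p_a(x|α), where K = Σ_{$-free h∈Σ*} p_s(h)·Σ_{x∈Σ} p_s(x|h)·log p_s(x|h) depends only on p_s. Consequently, minimizing D(p_s‖p_a) over a class of such target models is equivalent to maximizing Σ_{α∈Q_a} Σ_{x∈Σ} c(x,α)·log p_a(x|α). -/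

import Mathlib

open scoped BigOperators
open Classical

noncomputable section

variable {α : Type*}

/-- Probability of reading the string `x` after history `h` under conditional model `p`,
where `p h x` is the probability of next symbol `x` given history `h`. -/
def probFrom (p : List α → α → ℝ) : List α → List α → ℝ
  | _, [] => 1
  | h, x :: t => p h x * probFrom p (h ++ [x]) t

/-- Probability assigned to the string `x`: `p(x₁⋯xₙ) = ∏ᵢ p(xᵢ | x₁⋯xᵢ₋₁)`. -/
def strProb (p : List α → α → ℝ) (x : List α) : ℝ := probFrom p [] x

/-- `p` is a probabilistic model over `α` with distinguished end symbol `dollar`. -/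
structure IsProbModel [Fintype α] (dollar : α) (p : List α → α → ℝ) : Prop where
  nonneg : ∀ h x, 0 ≤ p h x
  sum_one : ∀ h, dollar ∉ h → ∑ x, p h x = 1
  halt : ∀ h, dollar ∈ h → ∀ x, p h x = 0

/-- The language of a model: strings of positive probability ending in (a single) `dollar`. -/
def Lang (dollar : α) (p : List α → α → ℝ) : Set (List α) :=
  {x | 0 < strProb p x ∧ ∃ w, x = w ++ [dollar] ∧ dollar ∉ w}

/-- `p` terminates almost surely. -/
def TerminatesAS (dollar : α) (p : List α → α → ℝ) : Prop :=
  ∑' x : Lang dollar p, strProb p x = 1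

/-- KL divergence between two sequence models (with the convention `0·log(0/0) = 0`,
which holds definitionally here since `Real.log 0 = 0`). -/
def KLdiv (dollar : α) (ps pa : List α → α → ℝ) : ℝ :=
  ∑' x : Lang dollar ps, strProb ps x * Real.log (strProb ps x / strProb pa x)

-- ## auxiliary lemmas

lemma probFrom_append (p : List α → α → ℝ) :
    ∀ (u h t : List α), probFrom p h (u ++ t) = probFrom p h u * probFrom p (h ++ u) t
  | [], h, t => by simp [probFrom]
  | x :: u, h, t => by
      show p h x * probFrom p (h ++ [x]) (u ++ t) = _
      rw [probFrom_append p u (h ++ [x]) t, probFrom, mul_assoc, List.append_assoc]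
      rfl

lemma strProb_append (p : List α → α → ℝ) (u t : List α) :
    strProb p (u ++ t) = strProb p u * probFrom p u t := by
  simpa [strProb] using probFrom_append p u [] t

lemma strProb_concat (p : List α → α → ℝ) (h : List α) (x : α) :
    strProb p (h ++ [x]) = strProb p h * p h x := by
  simp [strProb_append, probFrom]

lemma probFrom_nonneg {p : List α → α → ℝ} (hn : ∀ h x, 0 ≤ p h x) :
    ∀ (t h : List α), 0 ≤ probFrom p h t
  | [], h => by simp [probFrom]
  | x :: t, h => mul_nonneg (hn h x) (probFrom_nonneg hn t (h ++ [x]))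

lemma strProb_nonneg {p : List α → α → ℝ} (hn : ∀ h x, 0 ≤ p h x) (t : List α) :
    0 ≤ strProb p t := probFrom_nonneg hn t []


lemma sum_probFrom_le_one [Fintype α] {dollar : α} {p : List α → α → ℝ}
    (hp : IsProbModel dollar p) :
    ∀ (n : ℕ) (F : Finset (List α)), (∀ t ∈ F, t.length ≤ n) →
      (∀ t ∈ F, ∃ w, t = w ++ [dollar] ∧ dollar ∉ w) →
      ∀ h : List α, ∑ t ∈ F, probFrom p h t ≤ 1 := by
  intro n
  induction n with
  | zero =>
      intro F hlen hform h
      have hF : F = ∅ := by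
        rw [Finset.eq_empty_iff_forall_notMem]
        intro t ht
        obtain ⟨w, rfl, -⟩ := hform t ht
        have := hlen _ ht
        simp at this
      simp [hF]
  | succ n ih =>
      intro F hlen hform h
      have hsplit : ∑ t ∈ F, probFrom p h t
          = ∑ j : Option α, ∑ t ∈ F.filter (fun t => t.head? = j), probFrom p h t :=
        (Finset.sum_fiberwise F List.head? (probFrom p h)).symm
      have hnone : ∑ t ∈ F.filter (fun t => t.head? = (none : Option α)),
          probFrom p h t = 0 := by
        apply Finset.sum_eq_zero
        intro t ht
        rcases Finset.mem_filter.1 ht with ⟨htF, ht0⟩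
        obtain ⟨w, rfl, -⟩ := hform t htF
        simp at ht0
      have hsome : ∀ x : α, ∑ t ∈ F.filter (fun t => t.head? = some x),
          probFrom p h t ≤ p h x := by
        intro x
        set Fx := F.filter (fun t => t.head? = some x) with hFx
        have hmem : ∀ t ∈ Fx, t = x :: t.tail := by
          intro t ht
          rcases Finset.mem_filter.1 ht with ⟨-, ht0⟩
          cases t with
          | nil => simp at ht0
          | cons a t' => simp_all
        have h1 : ∑ t ∈ Fx, probFrom p h t
            = ∑ t ∈ Fx, p h x * probFrom p (h ++ [x]) t.tail := by
          apply Finset.sum_congr rfl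
          intro t ht
          conv_lhs => rw [hmem t ht]
          rfl
        have hinj : Set.InjOn List.tail (Fx : Set (List α)) := by
          intro a ha b hb hab
          rw [hmem a ha, hmem b hb, hab]
        have h2 : ∑ t ∈ Fx, probFrom p (h ++ [x]) t.tail
            = ∑ t' ∈ Fx.image List.tail, probFrom p (h ++ [x]) t' := by
          rw [Finset.sum_image]
          intro a ha b hb hab
          exact hinj ha hb hab
        have h3 : ∑ t' ∈ Fx.image List.tail, probFrom p (h ++ [x]) t' ≤ 1 := by
          by_cases hx : x = dollar
          · have hsub : Fx.image List.tail ⊆ {[]} := by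
              intro t' ht'
              rcases Finset.mem_image.1 ht' with ⟨t, ht, rfl⟩
              rcases Finset.mem_filter.1 ht with ⟨htF, ht0⟩
              obtain ⟨w, rfl, hw⟩ := hform t htF
              have hwnil : w = [] := by
                cases w with
                | nil => rfl
                | cons a w' =>
                    exfalso
                    simp at ht0
                    rw [ht0, hx] at hw
                    exact hw List.mem_cons_self
              subst hwnil
              simp
            calc ∑ t' ∈ Fx.image List.tail, probFrom p (h ++ [x]) t'
                ≤ ∑ t' ∈ ({[]} : Finset (List α)), probFrom p (h ++ [x]) t' :=
                  Finset.sum_le_sum_of_subset_of_nonneg hsub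
                    (fun t' _ _ => probFrom_nonneg hp.nonneg t' _)
              _ = 1 := by simp [probFrom]
          · apply ih
            · intro t' ht'
              rcases Finset.mem_image.1 ht' with ⟨t, ht, rfl⟩
              have := hlen t (Finset.mem_filter.1 ht).1
              have hne : t ≠ [] := by
                intro hnil
                rw [hnil] at ht
                exact absurd (Finset.mem_filter.1 ht).2 (by simp)
              cases t with
              | nil => exact absurd rfl hne
              | cons a t'' => simpa using Nat.succ_le_succ_iff.mp this
            · intro t' ht'
              rcases Finset.mem_image.1 ht' with ⟨t, ht, rfl⟩
              rcases Finset.mem_filter.1 ht with ⟨htF, ht0⟩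
              obtain ⟨w, rfl, hw⟩ := hform t htF
              cases w with
              | nil =>
                  exfalso
                  simp at ht0
                  exact hx ht0.symm
              | cons a w' =>
                  refine ⟨w', by simp, fun hmem' => hw (List.mem_cons_of_mem _ hmem')⟩
        calc ∑ t ∈ Fx, probFrom p h t
            = p h x * ∑ t ∈ Fx, probFrom p (h ++ [x]) t.tail := by
              rw [h1, Finset.mul_sum]
          _ = p h x * ∑ t' ∈ Fx.image List.tail, probFrom p (h ++ [x]) t' := by rw [h2]
          _ ≤ p h x * 1 := by
              apply mul_le_mul_of_nonneg_left h3 (hp.nonneg h x)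
          _ = p h x := mul_one _
      have hsum : ∑ x : α, p h x ≤ 1 := by
        by_cases hh : dollar ∈ h
        · simp [hp.halt h hh]
        · exact le_of_eq (hp.sum_one h hh)
      calc ∑ t ∈ F, probFrom p h t
          = ∑ j : Option α, ∑ t ∈ F.filter (fun t => t.head? = j), probFrom p h t := hsplit
        _ = ∑ x : α, ∑ t ∈ F.filter (fun t => t.head? = some x), probFrom p h t := by
            rw [Fintype.sum_option, hnone, zero_add]
        _ ≤ ∑ x : α, p h x := Finset.sum_le_sum (fun x _ => hsome x)
        _ ≤ 1 := hsum

lemma tail_form {dollar : α} {p : List α → α → ℝ} {h t : List α}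
    (hh : dollar ∉ h) (ht : h ++ t ∈ Lang dollar p) :
    ∃ w, t = w ++ [dollar] ∧ dollar ∉ w := by
  obtain ⟨-, v, hv, hvd⟩ := ht
  rcases List.eq_nil_or_concat t with rfl | ⟨t', y, rfl⟩
  · exfalso
    rw [List.append_nil] at hv
    exact hh (hv ▸ (by simp))
  · simp only [List.concat_eq_append] at hv ⊢
    rw [← List.append_assoc] at hv
    obtain ⟨h1, h2⟩ := List.append_inj' hv (by simp)
    have hy : y = dollar := by simpa using h2
    subst hy
    refine ⟨t', rfl, fun hmem => hvd ?_⟩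
    rw [← h1]
    exact List.mem_append_right _ hmem

def tailMass (dollar : α) (p : List α → α → ℝ) (h : List α) : ℝ :=
  ∑' t : {t : List α // h ++ t ∈ Lang dollar p}, probFrom p h t

lemma summable_tail [Fintype α] {dollar : α} {p : List α → α → ℝ}
    (hp : IsProbModel dollar p) {h : List α} (hh : dollar ∉ h) :
    Summable fun t : {t : List α // h ++ t ∈ Lang dollar p} => probFrom p h (t : List α) := by
  apply summable_of_sum_le (c := 1)
  · intro t
    exact probFrom_nonneg hp.nonneg _ _
  · intro u
    have : ∑ t ∈ u, probFrom p h (t : List α)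
        = ∑ t ∈ u.image Subtype.val, probFrom p h t := by
      rw [Finset.sum_image (fun a _ b _ hab => Subtype.ext hab)]
    rw [this]
    apply sum_probFrom_le_one hp ((u.image Subtype.val).sup List.length)
    · intro t ht
      exact Finset.le_sup ht
    · intro t ht
      rcases Finset.mem_image.1 ht with ⟨⟨t, htL⟩, -, rfl⟩
      exact tail_form hh htL

lemma tailMass_nonneg [Fintype α] {dollar : α} {p : List α → α → ℝ}
    (hp : IsProbModel dollar p) (h : List α) : 0 ≤ tailMass dollar p h :=
  tsum_nonneg (fun t => probFrom_nonneg hp.nonneg _ _)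

lemma tailMass_le_one [Fintype α] {dollar : α} {p : List α → α → ℝ}
    (hp : IsProbModel dollar p) {h : List α} (hh : dollar ∉ h) :
    tailMass dollar p h ≤ 1 := by
  apply Summable.tsum_le_of_sum_le (summable_tail hp hh)
  intro u
  have : ∑ t ∈ u, probFrom p h (t : List α)
      = ∑ t ∈ u.image Subtype.val, probFrom p h t := by
    rw [Finset.sum_image (fun a _ b _ hab => Subtype.ext hab)]
  rw [this]
  apply sum_probFrom_le_one hp ((u.image Subtype.val).sup List.length)
  · intro t ht
    exact Finset.le_sup ht
  · intro t ht
    rcases Finset.mem_image.1 ht with ⟨⟨t, htL⟩, -, rfl⟩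
    exact tail_form hh htL

set_option maxHeartbeats 1000000 in
def tailEquiv (dollar : α) (p : List α → α → ℝ) (h : List α) (hh : dollar ∉ h) :
    {t : List α // h ++ t ∈ Lang dollar p}
      ≃ Σ x : α, {t : List α // (h ++ [x]) ++ t ∈ Lang dollar p} where
  toFun := fun z =>
    match z with
    | ⟨[], ht⟩ => absurd ht (by
        rw [List.append_nil]
        rintro ⟨-, w, hw, hwd⟩
        exact hh (hw ▸ (by simp)))
    | ⟨x :: t', ht⟩ => ⟨x, ⟨t', by rw [List.append_assoc]; exact ht⟩⟩
  invFun := fun σ => ⟨σ.1 :: σ.2.1, by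
    rw [show h ++ (σ.1 :: σ.2.1) = (h ++ [σ.1]) ++ σ.2.1 by simp]
    exact σ.2.2⟩
  left_inv := fun z => by
    match z with
    | ⟨[], ht⟩ =>
        exact absurd ht (by
          rw [List.append_nil]
          rintro ⟨-, w, hw, hwd⟩
          exact hh (hw ▸ (by simp)))
    | ⟨x :: t', ht⟩ => rfl
  right_inv := fun σ => rfl

set_option maxHeartbeats 2000000 in
lemma tailMass_rec [Fintype α] {dollar : α} {p : List α → α → ℝ}
    (hp : IsProbModel dollar p) {h : List α} (hh : dollar ∉ h) :
    tailMass dollar p h = ∑ x : α, p h x * tailMass dollar p (h ++ [x]) := by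
  have hs := summable_tail hp hh
  have h1 : tailMass dollar p h
      = ∑' σ : (Σ x : α, {t : List α // (h ++ [x]) ++ t ∈ Lang dollar p}),
          probFrom p h (((tailEquiv dollar p h hh).symm σ : List α)) :=
    (Equiv.tsum_eq (tailEquiv dollar p h hh).symm
      (fun t : {t : List α // h ++ t ∈ Lang dollar p} => probFrom p h (t : List α))).symm
  rw [h1]
  have hs2 : Summable (fun σ : (Σ x : α, {t : List α // (h ++ [x]) ++ t ∈ Lang dollar p}) =>
      probFrom p h (((tailEquiv dollar p h hh).symm σ : List α))) :=
    ((tailEquiv dollar p h hh).symm).summable_iff.2 hs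
  rw [Summable.tsum_sigma hs2, tsum_fintype]
  refine Finset.sum_congr rfl (fun x _ => ?_)
  rw [tailMass, ← tsum_mul_left]
  exact tsum_congr (fun t => rfl)

lemma tailMass_nil (dollar : α) (p : List α → α → ℝ) :
    tailMass dollar p [] = ∑' x : Lang dollar p, strProb p x := by
  apply tsum_congr
  intro t
  rfl

lemma concat_dollar_tail_nil {dollar : α} {p : List α → α → ℝ} {h t : List α}
    (hh : dollar ∉ h) (ht : (h ++ [dollar]) ++ t ∈ Lang dollar p) : t = [] := by
  obtain ⟨-, v, hv, hvd⟩ := ht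
  rcases List.eq_nil_or_concat t with rfl | ⟨t', y, rfl⟩
  · rfl
  · exfalso
    simp only [List.concat_eq_append, ← List.append_assoc] at hv
    obtain ⟨h1, -⟩ := List.append_inj' hv (by simp)
    apply hvd
    rw [← h1]
    exact List.mem_append_left _ (List.mem_append_right _ (by simp))

lemma tailMass_concat_dollar [Fintype α] {dollar : α} {p : List α → α → ℝ}
    (hp : IsProbModel dollar p) {h : List α} (hh : dollar ∉ h) :
    tailMass dollar p (h ++ [dollar])
      = if h ++ [dollar] ∈ Lang dollar p then 1 else 0 := by
  split_ifs with hmem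
  · have hb : ((h ++ [dollar]) ++ ([] : List α)) ∈ Lang dollar p := by
      rw [List.append_nil]; exact hmem
    rw [tailMass, tsum_eq_single (⟨[], hb⟩ : {t : List α // (h ++ [dollar]) ++ t ∈ Lang dollar p})]
    · rfl
    · intro b hb'
      exfalso
      exact hb' (Subtype.ext (concat_dollar_tail_nil hh b.2))
  · have : IsEmpty {t : List α // (h ++ [dollar]) ++ t ∈ Lang dollar p} := by
      constructor
      rintro ⟨t, ht⟩
      have := concat_dollar_tail_nil hh ht
      subst this
      rw [List.append_nil] at ht
      exact hmem ht
    rw [tailMass, tsum_empty]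

lemma tailMass_le_one' [Fintype α] {dollar : α} {p : List α → α → ℝ}
    (hp : IsProbModel dollar p) {h : List α} (hh : dollar ∉ h) (x : α) :
    tailMass dollar p (h ++ [x]) ≤ 1 := by
  by_cases hx : x = dollar
  · subst hx
    rw [tailMass_concat_dollar hp hh]
    split_ifs <;> norm_num
  · exact tailMass_le_one hp (by
      intro hmem
      rcases List.mem_append.1 hmem with h1 | h1
      · exact hh h1
      · simp at h1; exact hx h1.symm)

lemma tailMass_eq_one [Fintype α] {dollar : α} {p : List α → α → ℝ}
    (hp : IsProbModel dollar p) (hterm : TerminatesAS dollar p) :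
    ∀ h : List α, dollar ∉ h → 0 < strProb p h → tailMass dollar p h = 1 := by
  intro h
  induction h using List.reverseRecOn with
  | nil =>
      intro _ _
      rw [tailMass_nil]
      exact hterm
  | append_singleton h x ih =>
      intro hh hpos
      have hhh : dollar ∉ h := fun hc => hh (List.mem_append_left _ hc)
      have hxd : x ≠ dollar := fun hc => hh (by simp [hc])
      rw [strProb_concat] at hpos
      have h0 : 0 < strProb p h ∧ 0 < p h x := by
        rcases mul_pos_iff.1 hpos with h1 | h1
        · exact h1
        · exact absurd h1.1 (not_lt.2 (strProb_nonneg hp.nonneg h))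
      have hTM := ih hhh h0.1
      rw [tailMass_rec hp hhh] at hTM
      have hle : ∀ y ∈ Finset.univ, p h y * tailMass dollar p (h ++ [y]) ≤ p h y * 1 :=
        fun y _ => mul_le_mul_of_nonneg_left (tailMass_le_one' hp hhh y) (hp.nonneg h y)
      have heq : ∑ y : α, p h y * tailMass dollar p (h ++ [y]) = ∑ y : α, p h y * 1 := by
        rw [hTM]
        simp [hp.sum_one h hhh]
      have := (Finset.sum_eq_sum_iff_of_le hle).1 heq x (Finset.mem_univ x)
      have hx1 : tailMass dollar p (h ++ [x]) = 1 :=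
        mul_left_cancel₀ (ne_of_gt h0.2) this
      exact hx1

lemma dollar_not_mem_concat {dollar : α} {h : List α} (hh : dollar ∉ h) {x : α}
    (hx : x ≠ dollar) : dollar ∉ h ++ [x] := by
  intro hmem
  rcases List.mem_append.1 hmem with h1 | h1
  · exact hh h1
  · simp at h1; exact hx h1.symm

def fiberEquiv (dollar : α) (p : List α → α → ℝ) (u : List α) :
    {w : List α // w ∈ Lang dollar p ∧ u <+: w} ≃ {t : List α // u ++ t ∈ Lang dollar p} where
  toFun := fun σ => ⟨(σ : List α).drop u.length, by
      obtain ⟨w, hL, t, rfl⟩ := σ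
      rw [List.drop_left]
      exact hL⟩
  invFun := fun σ => ⟨u ++ σ.1, ⟨σ.2, ⟨σ.1, rfl⟩⟩⟩
  left_inv := fun σ => by
    obtain ⟨w, hL, t, rfl⟩ := σ
    exact Subtype.ext (by simp [List.drop_left])
  right_inv := fun σ => Subtype.ext (by simp [List.drop_left])

lemma summable_fiber [Fintype α] {dollar : α} {p : List α → α → ℝ}
    (hp : IsProbModel dollar p) {h : List α} (hh : dollar ∉ h) (x : α) :
    Summable (fun w : {w : List α // w ∈ Lang dollar p ∧ h ++ [x] <+: w} =>
      strProb p (w : List α)) := by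
  by_cases hx : x = dollar
  · haveI : Subsingleton {w : List α // w ∈ Lang dollar p ∧ h ++ [x] <+: w} := by
      constructor
      rintro ⟨w1, hL1, t1, rfl⟩ ⟨w2, hL2, t2, rfl⟩
      rw [hx] at hL1 hL2
      have e1 : t1 = [] := concat_dollar_tail_nil hh hL1
      have e2 : t2 = [] := concat_dollar_tail_nil hh hL2
      subst e1; subst e2
      rfl
    haveI := Finite.of_subsingleton
      (α := {w : List α // w ∈ Lang dollar p ∧ h ++ [x] <+: w})
    exact Summable.of_finite
  · have hh' : dollar ∉ h ++ [x] := dollar_not_mem_concat hh hx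
    have hs : Summable (fun t : {t : List α // (h ++ [x]) ++ t ∈ Lang dollar p} =>
        strProb p (h ++ [x]) * probFrom p (h ++ [x]) (t : List α)) :=
      (summable_tail hp hh').mul_left _
    have := ((fiberEquiv dollar p (h ++ [x])).symm.summable_iff
      (f := fun w : {w : List α // w ∈ Lang dollar p ∧ h ++ [x] <+: w} =>
        strProb p (w : List α))).1
    apply this
    apply hs.congr
    intro t
    exact (strProb_append p (h ++ [x]) (t : List α)).symm

lemma tsum_fiber_eq [Fintype α] {dollar : α} {p : List α → α → ℝ}
    (hp : IsProbModel dollar p) (hterm : TerminatesAS dollar p)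
    {h : List α} (hh : dollar ∉ h) (x : α) :
    ∑' w : {w : List α // w ∈ Lang dollar p ∧ h ++ [x] <+: w}, strProb p (w : List α)
      = strProb p h * p h x := by
  have h1 : ∑' w : {w : List α // w ∈ Lang dollar p ∧ h ++ [x] <+: w}, strProb p (w : List α)
      = ∑' t : {t : List α // (h ++ [x]) ++ t ∈ Lang dollar p},
          strProb p ((h ++ [x]) ++ (t : List α)) :=
    (Equiv.tsum_eq (fiberEquiv dollar p (h ++ [x])).symm
      (fun w : {w : List α // w ∈ Lang dollar p ∧ h ++ [x] <+: w} =>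
        strProb p (w : List α))).symm
  have h2 : ∑' t : {t : List α // (h ++ [x]) ++ t ∈ Lang dollar p},
        strProb p ((h ++ [x]) ++ (t : List α))
      = strProb p (h ++ [x]) * tailMass dollar p (h ++ [x]) := by
    rw [tailMass, ← tsum_mul_left]
    exact tsum_congr (fun t => strProb_append p (h ++ [x]) (t : List α))
  rw [h1, h2, ← strProb_concat]
  rcases lt_or_eq_of_le (strProb_nonneg hp.nonneg (h ++ [x])) with hpos | hzero
  · by_cases hx : x = dollar
    · subst hx
      rw [tailMass_concat_dollar hp hh, if_pos ⟨hpos, h, rfl, hh⟩, mul_one]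
    · rw [tailMass_eq_one hp hterm _ (dollar_not_mem_concat hh hx) hpos, mul_one]
  · rw [← hzero, zero_mul]

lemma probFrom_eq_prod (p : List α → α → ℝ) :
    ∀ (t h : List α), probFrom p h t = ∏ i : Fin t.length, p (h ++ t.take i) (t.get i)
  | [], h => by simp [probFrom]
  | x :: t, h => by
      rw [probFrom, probFrom_eq_prod p t (h ++ [x])]
      have hcast : ∏ i : Fin (x :: t).length, p (h ++ (x :: t).take i) ((x :: t).get i)
          = ∏ i : Fin (t.length + 1), p (h ++ (x :: t).take i) ((x :: t).get i) := rfl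
      rw [hcast, Fin.prod_univ_succ]
      congr 1
      · simp
      · refine Finset.prod_congr rfl (fun i _ => ?_)
        simp [List.take_succ_cons, List.append_assoc]

lemma strProb_eq_prod (p : List α → α → ℝ) (w : List α) :
    strProb p w = ∏ i : Fin w.length, p (w.take i) (w.get i) := by
  rw [strProb, probFrom_eq_prod]
  simp

lemma log_strProb {p : List α → α → ℝ} {w : List α} (hw : 0 < strProb p w) :
    Real.log (strProb p w) = ∑ i : Fin w.length, Real.log (p (w.take i) (w.get i)) := by
  rw [strProb_eq_prod, ← Real.log_prod]
  intro i _ h0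
  rw [strProb_eq_prod] at hw
  exact absurd (Finset.prod_eq_zero (Finset.mem_univ i) h0) (ne_of_gt hw)

lemma lang_take_free {dollar : α} {ps : List α → α → ℝ} {w : List α}
    (hw : w ∈ Lang dollar ps) {i : ℕ} (hi : i < w.length) : dollar ∉ w.take i := by
  obtain ⟨-, v, rfl, hv⟩ := hw
  intro hc
  have hiv : i ≤ v.length := by
    rw [List.length_append, List.length_singleton] at hi
    omega
  rw [List.take_append_of_le_length hiv] at hc
  exact hv (List.take_subset _ _ hc)

lemma lang_prefix_get {dollar : α} {ps : List α → α → ℝ} {w : List α}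
    (hw : w ∈ Lang dollar ps) (i : Fin w.length) :
    w.take i ++ [w.get i] <+: w := by
  rw [List.get_eq_getElem, List.take_concat_get' w i i.2]
  exact List.take_prefix _ _

lemma sigma_fib_ext {dollar : α} {ps : List α → α → ℝ} {z1 z2 : {h : List α // dollar ∉ h} × α}
    (hz : z1 = z2)
    {w1 : {w : List α // w ∈ Lang dollar ps ∧ (z1.1 : List α) ++ [z1.2] <+: w}}
    {w2 : {w : List α // w ∈ Lang dollar ps ∧ (z2.1 : List α) ++ [z2.2] <+: w}}
    (hw : (w1 : List α) = (w2 : List α)) :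
    (⟨z1, w1⟩ : Σ z : {h : List α // dollar ∉ h} × α,
        {w : List α // w ∈ Lang dollar ps ∧ (z.1 : List α) ++ [z.2] <+: w}) = ⟨z2, w2⟩ := by
  subst hz
  exact congrArg _ (Subtype.ext hw)

lemma sigma_fin_ext {dollar : α} {ps : List α → α → ℝ} {w1 w2 : Lang dollar ps}
    (hw : w1 = w2) {i1 : Fin (w1 : List α).length} {i2 : Fin (w2 : List α).length}
    (hi : (i1 : ℕ) = (i2 : ℕ)) :
    (⟨w1, i1⟩ : Σ w : Lang dollar ps, Fin (w : List α).length) = ⟨w2, i2⟩ := by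
  subst hw
  exact congrArg _ (Fin.ext hi)

def decompEquiv (dollar : α) (ps : List α → α → ℝ) :
    (Σ z : {h : List α // dollar ∉ h} × α,
        {w : List α // w ∈ Lang dollar ps ∧ (z.1 : List α) ++ [z.2] <+: w})
      ≃ (Σ w : Lang dollar ps, Fin (w : List α).length) where
  toFun := fun σ => ⟨⟨σ.2.1, σ.2.2.1⟩, ⟨(σ.1.1 : List α).length, by
      show (σ.1.1 : List α).length < (σ.2.1 : List α).length
      have := σ.2.2.2.length_le
      rw [List.length_append, List.length_singleton] at this
      omega⟩⟩
  invFun := fun σ => ⟨⟨⟨(σ.1 : List α).take σ.2, lang_take_free σ.1.2 σ.2.2⟩,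
      (σ.1 : List α).get σ.2⟩, ⟨σ.1, σ.1.2, lang_prefix_get σ.1.2 σ.2⟩⟩
  left_inv := fun σ => by
    rcases σ with ⟨⟨⟨h, hh⟩, x⟩, ⟨w, hwL, hpre⟩⟩
    obtain ⟨t, rfl⟩ := hpre
    refine sigma_fib_ext ?_ rfl
    have e1 : (h ++ [x] ++ t).take h.length = h := by
      rw [List.append_assoc, List.take_left]
    have e2 : (h ++ [x] ++ t).get ⟨h.length, by simp⟩ = x := by
      rw [List.get_eq_getElem]
      rw [List.getElem_append_left (by simp : h.length < (h ++ [x]).length)]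
      rw [List.getElem_append_right (le_refl h.length)]
      simp
    exact Prod.ext (Subtype.ext e1) e2
  right_inv := fun σ => by
    rcases σ with ⟨⟨w, hwL⟩, i⟩
    refine sigma_fin_ext rfl ?_
    show ((w.take i : List α)).length = (i : ℕ)
    rw [List.length_take]
    exact min_eq_left_of_lt i.2

section Grand

variable [Fintype α] {dollar : α} {ps : List α → α → ℝ}

set_option maxHeartbeats 2000000 in
lemma grand (hp : IsProbModel dollar ps) (hterm : TerminatesAS dollar ps)
    (g : List α → α → ℝ)
    (Hsum : Summable fun z : {h : List α // dollar ∉ h} × α =>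
      strProb ps z.1 * ps z.1 z.2 * Real.log (g z.1 z.2)) :
    (Summable fun w : Lang dollar ps => strProb ps (w : List α) *
        ∑ i : Fin (w : List α).length,
          Real.log (g ((w : List α).take i) ((w : List α).get i)))
    ∧ ((∑' w : Lang dollar ps, strProb ps (w : List α) *
        ∑ i : Fin (w : List α).length,
          Real.log (g ((w : List α).take i) ((w : List α).get i)))
      = ∑' z : {h : List α // dollar ∉ h} × α,
          strProb ps z.1 * ps z.1 z.2 * Real.log (g z.1 z.2)) := by
  classical
  let F : (Σ z : {h : List α // dollar ∉ h} × α,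
      {w : List α // w ∈ Lang dollar ps ∧ (z.1 : List α) ++ [z.2] <+: w}) → ℝ :=
    fun σ => strProb ps (σ.2 : List α) * Real.log (g σ.1.1 σ.1.2)
  have hfibF : ∀ z : {h : List α // dollar ∉ h} × α,
      Summable (fun w : {w : List α // w ∈ Lang dollar ps ∧ (z.1 : List α) ++ [z.2] <+: w} =>
        F ⟨z, w⟩) := by
    intro z
    have h0 := (summable_fiber hp z.1.2 z.2).mul_right (Real.log (g z.1 z.2))
    exact h0
  have htsumF : ∀ z : {h : List α // dollar ∉ h} × α,
      (∑' w : {w : List α // w ∈ Lang dollar ps ∧ (z.1 : List α) ++ [z.2] <+: w}, F ⟨z, w⟩)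
        = strProb ps z.1 * ps z.1 z.2 * Real.log (g z.1 z.2) := by
    intro z
    show (∑' w : {w : List α // w ∈ Lang dollar ps ∧ (z.1 : List α) ++ [z.2] <+: w},
      strProb ps (w : List α) * Real.log (g z.1 z.2)) = _
    rw [tsum_mul_right, tsum_fiber_eq hp hterm z.1.2 z.2]
  have habs : Summable (fun σ : (Σ z : {h : List α // dollar ∉ h} × α,
      {w : List α // w ∈ Lang dollar ps ∧ (z.1 : List α) ++ [z.2] <+: w}) => |F σ|) := by
    refine (summable_sigma_of_nonneg (fun σ => abs_nonneg _)).2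
      ⟨fun z => (hfibF z).abs, ?_⟩
    have heq : ∀ z : {h : List α // dollar ∉ h} × α,
        (∑' w : {w : List α // w ∈ Lang dollar ps ∧ (z.1 : List α) ++ [z.2] <+: w},
          |F ⟨z, w⟩|)
        = |strProb ps z.1 * ps z.1 z.2 * Real.log (g z.1 z.2)| := by
      intro z
      have h1 : ∀ w : {w : List α // w ∈ Lang dollar ps ∧ (z.1 : List α) ++ [z.2] <+: w},
          |F ⟨z, w⟩| = strProb ps (w : List α) * |Real.log (g z.1 z.2)| := by
        intro w
        show |strProb ps (w : List α) * Real.log (g z.1 z.2)| = _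
        rw [abs_mul, abs_of_nonneg (strProb_nonneg hp.nonneg _)]
      rw [tsum_congr h1, tsum_mul_right, tsum_fiber_eq hp hterm z.1.2 z.2, abs_mul,
        abs_of_nonneg (mul_nonneg (strProb_nonneg hp.nonneg _) (hp.nonneg _ _))]
    exact Summable.congr Hsum.abs (fun z => (heq z).symm)
  have hFsum : Summable F := habs.of_abs
  have hright : (∑' σ, F σ)
      = ∑' z : {h : List α // dollar ∉ h} × α,
          strProb ps z.1 * ps z.1 z.2 * Real.log (g z.1 z.2) := by
    rw [Summable.tsum_sigma hFsum]
    exact tsum_congr htsumF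
  let G : (Σ w : Lang dollar ps, Fin (w : List α).length) → ℝ :=
    fun σ => strProb ps (σ.1 : List α) *
      Real.log (g ((σ.1 : List α).take σ.2) ((σ.1 : List α).get σ.2))
  have hGF : ∀ σ : (Σ w : Lang dollar ps, Fin (w : List α).length),
      G σ = F ((decompEquiv dollar ps).symm σ) := fun σ => rfl
  have hGsum : Summable G := by
    refine Summable.congr ?_ (fun σ => (hGF σ).symm)
    exact ((decompEquiv dollar ps).symm.summable_iff (f := F)).2 hFsum
  have hGtsum : (∑' σ, G σ) = ∑' σ, F σ := by
    rw [tsum_congr hGF]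
    exact (decompEquiv dollar ps).symm.tsum_eq F
  have hpoint : ∀ w : Lang dollar ps,
      (∑' i : Fin (w : List α).length, G ⟨w, i⟩)
        = strProb ps (w : List α) * ∑ i : Fin (w : List α).length,
            Real.log (g ((w : List α).take i) ((w : List α).get i)) := by
    intro w
    rw [tsum_fintype]
    show (∑ i : Fin (w : List α).length, strProb ps (w : List α) *
        Real.log (g ((w : List α).take i) ((w : List α).get i))) = _
    rw [← Finset.mul_sum]
  constructor
  · exact Summable.congr (hGsum.sigma' (fun b => Summable.of_finite)) (fun w => hpoint w)
  · rw [← hright, ← hGtsum, Summable.tsum_sigma hGsum]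
    exact tsum_congr (fun w => (hpoint w).symm)

end Grand

def stateEquiv {Qa : Type*} (dollar : α) (qa : List α → Qa) :
    (Σ a : Qa, ({h : List α // dollar ∉ h ∧ qa h = a} × α))
      ≃ ({h : List α // dollar ∉ h} × α) where
  toFun σ := (⟨σ.2.1.1, σ.2.1.2.1⟩, σ.2.2)
  invFun z := ⟨qa z.1.1, (⟨z.1.1, z.1.2, rfl⟩, z.2)⟩
  left_inv σ := by
    rcases σ with ⟨a, ⟨⟨h, hh, ha⟩, x⟩⟩
    subst ha
    rfl
  right_inv z := rfl

set_option maxHeartbeats 2000000 in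
/-- **Corollary 1 of the paper.** With counts
`c(x,α) = Σ_{$-free h : q_a(h)=α} p_s(h)·p_s(x|h)`, the KL divergence equals a constant
`K` (depending only on `p_s`) minus `Σ_α Σ_x c(x,α)·log p_a(x|α)`; hence minimizing the
divergence amounts to maximizing the latter sum. -/
theorem kl_count_form [Fintype α] {Qs Qa : Type*} (dollar : α)
    (ps pa : List α → α → ℝ)
    (hps : IsProbModel dollar ps) (hpa : IsProbModel dollar pa)
    (qs : List α → Qs) (fs : α → Qs → ℝ)
    (qa : List α → Qa) (fa : α → Qa → ℝ)
    (hfs : ∀ h : List α, dollar ∉ h → ∀ x : α, ps h x = fs x (qs h))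
    (hfa : ∀ h : List α, dollar ∉ h → ∀ x : α, pa h x = fa x (qa h))
    (hsub : Lang dollar ps ⊆ Lang dollar pa)
    (hterm : TerminatesAS dollar ps)
    (hsum1 : Summable fun x : Lang dollar ps =>
      strProb ps x * Real.log (strProb ps x / strProb pa x))
    (hsum2 : Summable fun z : {h : List α // dollar ∉ h} × α =>
      strProb ps z.1 * ps z.1 z.2 * Real.log (ps z.1 z.2))
    (hsum3 : Summable fun z : {h : List α // dollar ∉ h} × α =>
      strProb ps z.1 * ps z.1 z.2 * Real.log (pa z.1 z.2)) :
    KLdiv dollar ps pa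
      = (∑' h : {h : List α // dollar ∉ h},
            strProb ps h * ∑ x : α, ps h x * Real.log (ps h x))
        - ∑' a : Qa, ∑ x : α,
            (∑' h : {h : List α // dollar ∉ h ∧ qa h = a}, strProb ps h.1 * ps h.1 x)
              * Real.log (fa x a) := by
  classical
  have h2 := grand hps hterm ps hsum2
  have h3 := grand hps hterm pa hsum3
  have key1 : ∀ w : Lang dollar ps,
      strProb ps (w : List α) * Real.log (strProb ps (w : List α) / strProb pa (w : List α))
      = strProb ps (w : List α) * (∑ i : Fin (w : List α).length,
            Real.log (ps ((w : List α).take i) ((w : List α).get i)))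
        - strProb ps (w : List α) * (∑ i : Fin (w : List α).length,
            Real.log (pa ((w : List α).take i) ((w : List α).get i))) := by
    intro w
    have hw1 : 0 < strProb ps (w : List α) := w.2.1
    have hw2 : 0 < strProb pa (w : List α) := (hsub w.2).1
    rw [Real.log_div (ne_of_gt hw1) (ne_of_gt hw2), mul_sub, log_strProb hw1, log_strProb hw2]
  have hKL : KLdiv dollar ps pa
      = (∑' w : Lang dollar ps, strProb ps (w : List α) * ∑ i : Fin (w : List α).length,
            Real.log (ps ((w : List α).take i) ((w : List α).get i)))
        - (∑' w : Lang dollar ps, strProb ps (w : List α) * ∑ i : Fin (w : List α).length,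
            Real.log (pa ((w : List α).take i) ((w : List α).get i))) := by
    rw [KLdiv, tsum_congr key1, Summable.tsum_sub h2.1 h3.1]
  rw [hKL, h2.2, h3.2]
  congr 1
  · -- T(ps) = K
    rw [Summable.tsum_prod hsum2]
    refine tsum_congr (fun h => ?_)
    rw [tsum_fintype, Finset.mul_sum]
    exact Finset.sum_congr rfl (fun x _ => mul_assoc _ _ _)
  · -- T(pa) = state-grouped sum
    have hcongr : ∀ z : {h : List α // dollar ∉ h} × α,
        strProb ps z.1 * ps z.1 z.2 * Real.log (pa z.1 z.2)
        = strProb ps z.1 * ps z.1 z.2 * Real.log (fa z.2 (qa z.1)) := by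
      intro z
      rw [hfa z.1.1 z.1.2 z.2]
    have hsum4 : Summable fun z : {h : List α // dollar ∉ h} × α =>
        strProb ps z.1 * ps z.1 z.2 * Real.log (fa z.2 (qa z.1)) :=
      hsum3.congr hcongr
    have hsum5 : Summable fun σ : (Σ a : Qa, ({h : List α // dollar ∉ h ∧ qa h = a} × α)) =>
        strProb ps ((stateEquiv dollar qa σ).1 : List α)
          * ps ((stateEquiv dollar qa σ).1 : List α) (stateEquiv dollar qa σ).2
          * Real.log (fa (stateEquiv dollar qa σ).2 (qa (stateEquiv dollar qa σ).1)) :=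
      ((stateEquiv dollar qa).summable_iff).2 hsum4
    have inner : ∀ a : Qa,
        (∑' zc : ({h : List α // dollar ∉ h ∧ qa h = a} × α),
            strProb ps (zc.1.1 : List α) * ps (zc.1.1 : List α) zc.2
              * Real.log (fa zc.2 (qa zc.1.1)))
        = ∑ x : α, (∑' h : {h : List α // dollar ∉ h ∧ qa h = a},
            strProb ps (h : List α) * ps (h : List α) x) * Real.log (fa x a) := by
      intro a
      have hGa0 : Summable fun zc : ({h : List α // dollar ∉ h ∧ qa h = a} × α) =>
          strProb ps (zc.1.1 : List α) * ps (zc.1.1 : List α) zc.2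
            * Real.log (fa zc.2 (qa zc.1.1)) := hsum5.sigma_factor a
      have hconga : ∀ zc : ({h : List α // dollar ∉ h ∧ qa h = a} × α),
          strProb ps (zc.1.1 : List α) * ps (zc.1.1 : List α) zc.2
            * Real.log (fa zc.2 (qa zc.1.1))
          = strProb ps (zc.1.1 : List α) * ps (zc.1.1 : List α) zc.2
            * Real.log (fa zc.2 a) := by
        intro zc
        rw [zc.1.2.2]
      have hGa : Summable fun zc : ({h : List α // dollar ∉ h ∧ qa h = a} × α) =>
          strProb ps (zc.1.1 : List α) * ps (zc.1.1 : List α) zc.2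
            * Real.log (fa zc.2 a) := hGa0.congr hconga
      rw [tsum_congr hconga, Summable.tsum_prod hGa]
      have hswap : ∀ x : α, Summable fun h : {h : List α // dollar ∉ h ∧ qa h = a} =>
          strProb ps (h : List α) * ps (h : List α) x * Real.log (fa x a) :=
        fun x => hGa.prod_symm.prod_factor x
      calc (∑' (h : {h : List α // dollar ∉ h ∧ qa h = a}) (x : α),
              strProb ps (h : List α) * ps (h : List α) x * Real.log (fa x a))
          = ∑' h : {h : List α // dollar ∉ h ∧ qa h = a}, ∑ x : α,
              strProb ps (h : List α) * ps (h : List α) x * Real.log (fa x a) :=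
            tsum_congr (fun h => tsum_fintype _)
        _ = ∑ x : α, ∑' h : {h : List α // dollar ∉ h ∧ qa h = a},
              strProb ps (h : List α) * ps (h : List α) x * Real.log (fa x a) :=
            Summable.tsum_finsetSum (fun x _ => hswap x)
        _ = ∑ x : α, (∑' h : {h : List α // dollar ∉ h ∧ qa h = a},
              strProb ps (h : List α) * ps (h : List α) x) * Real.log (fa x a) :=
            Finset.sum_congr rfl (fun x _ => tsum_mul_right)
    calc (∑' z : {h : List α // dollar ∉ h} × α,
            strProb ps (z.1 : List α) * ps (z.1 : List α) z.2 * Real.log (pa (z.1 : List α) z.2))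
        = ∑' z : {h : List α // dollar ∉ h} × α,
            strProb ps (z.1 : List α) * ps (z.1 : List α) z.2
              * Real.log (fa z.2 (qa (z.1 : List α))) := tsum_congr hcongr
      _ = ∑' σ : (Σ a : Qa, ({h : List α // dollar ∉ h ∧ qa h = a} × α)),
            strProb ps ((stateEquiv dollar qa σ).1 : List α)
              * ps ((stateEquiv dollar qa σ).1 : List α) (stateEquiv dollar qa σ).2
              * Real.log (fa (stateEquiv dollar qa σ).2 (qa (stateEquiv dollar qa σ).1)) :=
            ((stateEquiv dollar qa).tsum_eq _).symm
      _ = ∑' (a : Qa), ∑' zc : ({h : List α // dollar ∉ h ∧ qa h = a} × α),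
            strProb ps (zc.1.1 : List α) * ps (zc.1.1 : List α) zc.2
              * Real.log (fa zc.2 (qa zc.1.1)) := Summable.tsum_sigma hsum5
      _ = ∑' a : Qa, ∑ x : α, (∑' h : {h : List α // dollar ∉ h ∧ qa h = a},
            strProb ps (h : List α) * ps (h : List α) x) * Real.log (fa x a) :=
            tsum_congr inner

end
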